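/- arXiv:2512.07008 — 2 statements merged into one kernel-verified Lean document; each statement's English description precedes it below -/
import Mathlib

section
/- For n ≥ 2, the total number of ascents over all Catalan words of length n equals C(2n-1, n-2). -/
def IsCatalanWord (w : List ℕ) : Prop :=
  (∀ x ∈ w, 0 < x) ∧ (0 < w.length → w.getD 0 0 = 1) ∧
    ∀ i, i + 1 < w.length → w.getD (i + 1) 0 ≤ w.getD i 0 + 1

/-!
A Catalan word of length `m + 1` is `1 :: c` with `c` an extension of the letter `1`, i.e. a
word that may follow it. Sorting the extensions `c` of a letter `p` by their first letter
`j + 1 ≤ p + 1` gives recursions both for their number and for the number of pairs of an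
extension and an ascent of `p :: c`; the ascent sits in front exactly when `j = p`. By induction
and Pascal's rule, for extensions of length `m` these numbers are the ballot number
`C(2m+p, m+p) - C(2m+p, m+p+1)` and, when `m ≥ 1`, `C(2m+p-1, m+p) + p C(2m+p-1, m+p+1)`.
At `p = 1` the latter is `C(2m+1, m+2)`.
-/

open Finset

theorem Finset.card_biUnion_image {ι α β : Type*} [DecidableEq β] {s : Finset ι}
    {t : ι → Finset α} {f : ι → α → β} (hf : ∀ i, Function.Injective (f i))
    (hdisj : ∀ i j a b, f i a = f j b → i = j) :
    #(s.biUnion fun i => (t i).image (f i)) = ∑ i ∈ s, #(t i) := by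
  rw [card_biUnion]
  · exact sum_congr rfl fun i _ => card_image_of_injective _ (hf i)
  · intro i _ j _ hij
    simp only [Function.onFun, disjoint_left, mem_image]
    rintro _ ⟨a, -, rfl⟩ ⟨b, -, hab⟩
    exact hij (hdisj j i b a hab).symm

namespace CatalanWord

def Step (a b : ℕ) : Prop := 0 < b ∧ b ≤ a + 1

def IsAscentAt (l : List ℕ) (i : ℕ) : Prop := i + 1 < l.length ∧ l.getD i 0 < l.getD (i + 1) 0

@[simp] lemma not_isAscentAt_singleton (a i : ℕ) : ¬IsAscentAt [a] i := by simp [IsAscentAt]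

@[simp] lemma isAscentAt_cons_cons_zero (a b : ℕ) (l : List ℕ) :
    IsAscentAt (a :: b :: l) 0 ↔ a < b := by simp [IsAscentAt]

@[simp] lemma isAscentAt_cons_succ (a i : ℕ) (l : List ℕ) :
    IsAscentAt (a :: l) (i + 1) ↔ IsAscentAt l i := by simp [IsAscentAt]

lemma step_iff_exists (p v : ℕ) : Step p v ↔ ∃ j < p + 1, j + 1 = v := by
  constructor
  · rintro ⟨h₀, h₁⟩
    exact ⟨v - 1, by omega, by omega⟩
  · rintro ⟨j, hj, rfl⟩
    exact ⟨j.succ_pos, by omega⟩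

def extensions : ℕ → ℕ → Finset (List ℕ)
  | 0, _ => {[]}
  | m + 1, p => (range (p + 1)).biUnion fun j => (extensions m (j + 1)).image ((j + 1) :: ·)

def ascentExtensions : ℕ → ℕ → Finset (List ℕ × ℕ)
  | 0, _ => ∅
  | m + 1, p =>
    ((range (p + 1)).biUnion fun j =>
      (ascentExtensions m (j + 1)).image fun q => ((j + 1) :: q.1, q.2 + 1)) ∪
    (extensions m (p + 1)).image fun c => ((p + 1) :: c, 0)

theorem mem_extensions {m p : ℕ} {c : List ℕ} :
    c ∈ extensions m p ↔ c.length = m ∧ (p :: c).IsChain Step := by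
  induction m generalizing p c with
  | zero => simp +contextual [extensions, List.length_eq_zero_iff]
  | succ m ih =>
    cases c with
    | nil => simp [extensions]
    | cons v c =>
      simp only [extensions, mem_biUnion, mem_range, mem_image, List.cons.injEq, ih,
        List.length_cons, List.isChain_cons_cons, step_iff_exists]
      constructor
      · rintro ⟨j, hj, c, ⟨rfl, hc⟩, rfl, rfl⟩
        exact ⟨rfl, ⟨j, hj, rfl⟩, hc⟩
      · rintro ⟨hlen, ⟨j, hj, rfl⟩, hc⟩
        exact ⟨j, hj, c, ⟨by omega, hc⟩, rfl, rfl⟩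

theorem mem_ascentExtensions {m p i : ℕ} {c : List ℕ} :
    (c, i) ∈ ascentExtensions m p ↔
      c.length = m ∧ (p :: c).IsChain Step ∧ IsAscentAt (p :: c) i := by
  induction m generalizing p c i with
  | zero => simp +contextual [ascentExtensions, List.length_eq_zero_iff]
  | succ m ih =>
    cases c with
    | nil => simp [ascentExtensions]
    | cons v c =>
      cases i with
      | zero =>
        simp only [ascentExtensions, mem_union, mem_biUnion, mem_image, Prod.mk.injEq,
          List.cons.injEq, mem_extensions, List.length_cons, List.isChain_cons_cons,
          isAscentAt_cons_cons_zero, Step]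
        constructor
        · rintro (⟨_, -, _, -, -, h⟩ | ⟨c, ⟨rfl, hc⟩, ⟨rfl, rfl⟩, -⟩)
          · omega
          · exact ⟨rfl, ⟨⟨p.succ_pos, le_rfl⟩, hc⟩, p.lt_succ_self⟩
        · rintro ⟨hlen, ⟨⟨-, hv⟩, hc⟩, hpv⟩
          obtain rfl : v = p + 1 := by omega
          exact .inr ⟨c, ⟨by omega, hc⟩, ⟨rfl, rfl⟩, trivial⟩
      | succ i =>
        simp only [ascentExtensions, mem_union, mem_biUnion, mem_range, mem_image, Prod.mk.injEq,
          List.cons.injEq, ih, List.length_cons, List.isChain_cons_cons, isAscentAt_cons_succ,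
          step_iff_exists, Prod.exists, add_left_inj]
        constructor
        · rintro (⟨j, hj, c, i, ⟨rfl, hc, hi⟩, ⟨rfl, rfl⟩, rfl⟩ | ⟨_, -, -, h⟩)
          · exact ⟨rfl, ⟨⟨j, hj, rfl⟩, hc⟩, hi⟩
          · omega
        · rintro ⟨rfl, ⟨⟨j, hj, rfl⟩, hc⟩, hi⟩
          exact .inl ⟨j, hj, c, i, ⟨rfl, hc, hi⟩, ⟨rfl, rfl⟩, rfl⟩

theorem card_extensions_succ (m p : ℕ) :
    #(extensions (m + 1) p) = ∑ j ∈ range (p + 1), #(extensions m (j + 1)) :=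
  card_biUnion_image (fun _ => List.cons_injective)
    fun _ _ _ _ h => Nat.succ_injective (List.head_eq_of_cons_eq h)

theorem card_ascentExtensions_succ (m p : ℕ) :
    #(ascentExtensions (m + 1) p) =
      ∑ j ∈ range (p + 1), #(ascentExtensions m (j + 1)) + #(extensions m (p + 1)) := by
  rw [ascentExtensions, card_union_of_disjoint,
    card_image_of_injective _ fun _ _ h => by simpa using h, card_biUnion_image]
  · intro j q r h
    simp only [Prod.mk.injEq, List.cons.injEq, add_left_inj] at h
    exact Prod.ext h.1.2 h.2
  · intro _ _ _ _ h
    simpa using List.head_eq_of_cons_eq (congrArg Prod.fst h)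
  · simp only [disjoint_left, mem_biUnion, mem_image]
    rintro _ ⟨_, -, _, -, rfl⟩ ⟨_, -, h⟩
    simp at h

theorem card_extensions_succ_zero (m : ℕ) :
    #(extensions (m + 1) 0) = #(extensions m 1) := by
  simp [card_extensions_succ]

theorem card_extensions_succ_succ (m p : ℕ) :
    #(extensions (m + 1) (p + 1)) = #(extensions (m + 1) p) + #(extensions m (p + 2)) := by
  rw [card_extensions_succ, card_extensions_succ, sum_range_succ _ (p + 1)]

theorem card_ascentExtensions_succ_zero (m : ℕ) :
    #(ascentExtensions (m + 1) 0) = #(ascentExtensions m 1) + #(extensions m 1) := by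
  simp [card_ascentExtensions_succ]

theorem card_ascentExtensions_succ_succ (m p : ℕ) :
    #(ascentExtensions (m + 1) (p + 1)) + #(extensions m (p + 1)) =
      #(ascentExtensions (m + 1) p) + #(ascentExtensions m (p + 2)) + #(extensions m (p + 2)) := by
  rw [card_ascentExtensions_succ, card_ascentExtensions_succ, sum_range_succ _ (p + 1)]
  ring

theorem card_extensions_add_choose (m p : ℕ) :
    #(extensions m p) + (2 * m + p).choose (m + p + 1) = (2 * m + p).choose (m + p) := by
  induction m generalizing p with
  | zero => simp [extensions]
  | succ m ihm =>
    induction p with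
    | zero =>
      have h := ihm 1
      have hrec := card_extensions_succ_zero m
      have h₁ := Nat.choose_succ_succ' (2 * m + 1) (m + 1)
      have h₂ := Nat.choose_succ_succ' (2 * m + 1) m
      have h₃ := Nat.choose_symm_half m
      ring_nf at h hrec h₁ h₂ h₃ ⊢
      omega
    | succ p ihp =>
      have h := ihm (p + 2)
      have hrec := card_extensions_succ_succ m p
      have h₁ := Nat.choose_succ_succ' (2 * m + p + 2) (m + p + 2)
      have h₂ := Nat.choose_succ_succ' (2 * m + p + 2) (m + p + 1)
      ring_nf at h hrec h₁ h₂ ihp ⊢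
      omega

theorem card_ascentExtensions_succ_eq (m p : ℕ) :
    #(ascentExtensions (m + 1) p) =
      (2 * m + p + 1).choose (m + p + 1) + p * (2 * m + p + 1).choose (m + p + 2) := by
  induction m generalizing p with
  | zero =>
    rw [card_ascentExtensions_succ]
    simp [ascentExtensions, extensions]
  | succ m ihm =>
    induction p with
    | zero =>
      have hrec := card_ascentExtensions_succ_zero (m + 1)
      have h₁ := ihm 1
      have h₂ := card_extensions_add_choose (m + 1) 1
      have h₃ := Nat.choose_succ_succ' (2 * m + 2) (m + 2)
      ring_nf at hrec h₁ h₂ h₃ ⊢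
      omega
    | succ p ihp =>
      have hrec := card_ascentExtensions_succ_succ (m + 1) p
      have h₁ := ihm (p + 2)
      have h₂ := card_extensions_add_choose (m + 1) (p + 2)
      have h₃ := card_extensions_add_choose (m + 1) (p + 1)
      have h₄ := Nat.choose_succ_succ' (2 * m + p + 3) (m + p + 3)
      have h₅ := congrArg (p * ·) h₄
      ring_nf at hrec h₁ h₂ h₃ h₄ h₅ ihp ⊢
      omega

theorem isCatalanWord_cons_iff {a : ℕ} {c : List ℕ} :
    IsCatalanWord (a :: c) ↔ a = 1 ∧ (a :: c).IsChain Step := by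
  constructor
  · rintro ⟨hpos, hhead, hstep⟩
    refine ⟨by simpa using hhead (by simp), List.isChain_iff_getElem.2 fun i hi => ⟨?_, ?_⟩⟩
    · exact hpos _ (List.getElem_mem _)
    · simpa only [List.getD_eq_getElem _ _ hi, List.getD_eq_getElem _ _ (Nat.lt_of_succ_lt hi)]
        using hstep i hi
  · rintro ⟨rfl, hc⟩
    refine ⟨fun x hx => ?_, by simp, fun i hi => ?_⟩
    · obtain ⟨_ | i, hi, rfl⟩ := List.getElem_of_mem hx
      · simp
      · exact (hc.getElem i hi).1
    · rw [List.getD_eq_getElem _ _ hi, List.getD_eq_getElem _ _ (Nat.lt_of_succ_lt hi)]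
      exact (hc.getElem i hi).2

theorem mem_image_ascentExtensions {m i : ℕ} {w : List ℕ} :
    (w, i) ∈ (ascentExtensions m 1).image (Prod.map (1 :: ·) id) ↔
      IsCatalanWord w ∧ w.length = m + 1 ∧ IsAscentAt w i := by
  cases w with
  | nil => simp
  | cons a c =>
    simp only [mem_image, Prod.exists, Prod.map, id, Prod.mk.injEq, List.cons.injEq,
      mem_ascentExtensions, isCatalanWord_cons_iff, List.length_cons, add_left_inj]
    constructor
    · rintro ⟨c, i, ⟨hlen, hc, hi⟩, ⟨rfl, rfl⟩, rfl⟩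
      exact ⟨⟨rfl, hc⟩, hlen, hi⟩
    · rintro ⟨⟨rfl, hc⟩, hlen, hi⟩
      exact ⟨c, i, ⟨hlen, hc, hi⟩, ⟨rfl, rfl⟩, rfl⟩

end CatalanWord

open CatalanWord

/-- Total number of ascents over all Catalan words of length n. -/
theorem total_ascents (n : ℕ) (hn : 2 ≤ n) :
    Nat.card {p : List ℕ × ℕ //
        IsCatalanWord p.1 ∧ p.1.length = n ∧
        p.2 + 1 < n ∧ p.1.getD p.2 0 < p.1.getD (p.2 + 1) 0} =
      (2 * n - 1).choose (n - 2) := by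
  obtain ⟨m, rfl⟩ : ∃ m, n = m + 2 := ⟨n - 2, by omega⟩
  have hmem (q : List ℕ × ℕ) : (IsCatalanWord q.1 ∧ q.1.length = m + 2 ∧
      q.2 + 1 < m + 2 ∧ q.1.getD q.2 0 < q.1.getD (q.2 + 1) 0) ↔
      q ∈ (ascentExtensions (m + 1) 1).image (Prod.map (1 :: ·) id) := by
    rw [mem_image_ascentExtensions, IsAscentAt]
    constructor
    · rintro ⟨hw, hlen, hi⟩
      exact ⟨hw, hlen, hlen ▸ hi⟩
    · rintro ⟨hw, hlen, hi⟩
      exact ⟨hw, hlen, hlen ▸ hi⟩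
  have hpascal := Nat.choose_succ_succ' (2 * m + 2) (m + 2)
  rw [Nat.card_congr (Equiv.subtypeEquivRight hmem), Nat.card_eq_finsetCard,
    card_image_of_injective _ (Prod.map_injective.2 ⟨List.cons_injective, Function.injective_id⟩),
    card_ascentExtensions_succ_eq, show 2 * (m + 2) - 1 = m + (m + 3) by omega, Nat.add_sub_cancel,
    Nat.choose_symm_add]
  ring_nf at hpascal ⊢
  omega
end

section
/- For n ≥ 3, the total number of descents over all Catalan words of length n equals C(2n-2, n-3). -/
open Finset

theorem isCatalanWord_iff_isChain {w : List ℕ} :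
    IsCatalanWord w ↔
      (∀ x ∈ w, 0 < x) ∧ (∀ a ∈ w.head?, a = 1) ∧ w.IsChain (fun a b => b ≤ a + 1) := by
  have hstep : (∀ i, i + 1 < w.length → w.getD (i + 1) 0 ≤ w.getD i 0 + 1) ↔
      w.IsChain (fun a b => b ≤ a + 1) := by
    rw [List.isChain_iff_getElem]
    refine forall_congr' fun i => forall_congr' fun hi => ?_
    rw [List.getD_eq_getElem _ _ hi, List.getD_eq_getElem _ _ (by omega)]
  rw [IsCatalanWord, hstep]
  rcases w with _ | ⟨a, w⟩ <;> simp

theorem isCatalanWord_append_singleton_iff {u : List ℕ} {k : ℕ} :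
    IsCatalanWord (u ++ [k]) ↔ IsCatalanWord u ∧ 1 ≤ k ∧ k ≤ u.getLastD 0 + 1 := by
  rcases u.eq_nil_or_concat with rfl | ⟨v, a, rfl⟩
  · simp [isCatalanWord_iff_isChain]; omega
  · simp [isCatalanWord_iff_isChain, List.isChain_append, or_imp, forall_and]
    tauto

def catalanWords : ℕ → Finset (List ℕ)
  | 0 => {[]}
  | n + 1 => (catalanWords n).biUnion fun u => (Icc 1 (u.getLastD 0 + 1)).image (u ++ [·])

theorem mem_catalanWords_succ {n : ℕ} {w : List ℕ} :
    w ∈ catalanWords (n + 1) ↔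
      ∃ u ∈ catalanWords n, ∃ k, (1 ≤ k ∧ k ≤ u.getLastD 0 + 1) ∧ u ++ [k] = w := by
  simp [catalanWords]

theorem mem_catalanWords {n : ℕ} {w : List ℕ} :
    w ∈ catalanWords n ↔ IsCatalanWord w ∧ w.length = n := by
  induction n generalizing w with
  | zero =>
    simp only [catalanWords, mem_singleton]
    constructor
    · rintro rfl; simp [isCatalanWord_iff_isChain]
    · exact fun h => List.eq_nil_of_length_eq_zero h.2
  | succ n ih =>
    rcases w.eq_nil_or_concat with rfl | ⟨u, k, rfl⟩
    · simp [mem_catalanWords_succ]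
    · simp [mem_catalanWords_succ, ih, isCatalanWord_append_singleton_iff]
      tauto

theorem getLastD_le_of_mem_catalanWords {n : ℕ} {w : List ℕ} (hw : w ∈ catalanWords n) :
    w.getLastD 0 ≤ n := by
  induction n generalizing w with
  | zero => simp_all [catalanWords]
  | succ n ih =>
    obtain ⟨u, hu, k, hk, rfl⟩ := mem_catalanWords_succ.1 hw
    have := ih hu
    simp only [List.getLastD_concat]
    omega

theorem one_le_getLastD_of_mem_catalanWords {n : ℕ} {w : List ℕ}
    (hw : w ∈ catalanWords (n + 1)) : 1 ≤ w.getLastD 0 := by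
  obtain ⟨u, -, k, hk, rfl⟩ := mem_catalanWords_succ.1 hw
  simpa using hk.1

def descentCount (w : List ℕ) : ℕ :=
  #{i ∈ range (w.length - 1) | w.getD (i + 1) 0 < w.getD i 0}

theorem descentCount_append_singleton (u : List ℕ) (k : ℕ) :
    descentCount (u ++ [k]) = descentCount u + if k < u.getLastD 0 then 1 else 0 := by
  rcases u.eq_nil_or_concat with rfl | ⟨v, a, rfl⟩
  · simp [descentCount]
  · simp only [descentCount, card_filter, List.concat_eq_append, List.length_append,
      List.length_singleton, Nat.add_sub_cancel, sum_range_succ, List.getLastD_concat]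
    congr 1
    · refine sum_congr rfl fun i hi => ?_
      rw [mem_range] at hi
      rw [List.getD_append (v ++ [a]) [k] 0 (i + 1) (by simp; omega),
        List.getD_append (v ++ [a]) [k] 0 i (by simp; omega)]
    · simp

theorem descentCount_eq_zero_of_mem_catalanWords {n : ℕ} {w : List ℕ} (hw : w ∈ catalanWords n)
    (hlast : n ≤ w.getLastD 0 + 1) : descentCount w = 0 := by
  induction n generalizing w with
  | zero => simp_all [catalanWords, descentCount]
  | succ n ih =>
    obtain ⟨u, hu, k, hk, rfl⟩ := mem_catalanWords_succ.1 hw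
    have hu_last := getLastD_le_of_mem_catalanWords hu
    rw [List.getLastD_concat] at hlast
    rw [descentCount_append_singleton, ih hu (by omega), if_neg (by omega)]

def catalanWordsLastGE (n m : ℕ) : Finset (List ℕ) :=
  {w ∈ catalanWords n | m ≤ w.getLastD 0}

theorem catalanWordsLastGE_zero (n : ℕ) : catalanWordsLastGE n 0 = catalanWords n :=
  filter_true_of_mem fun _ _ => Nat.zero_le _

theorem catalanWordsLastGE_eq_empty {n m : ℕ} (h : n < m) : catalanWordsLastGE n m = ∅ :=
  filter_false_of_mem fun w hw => by have := getLastD_le_of_mem_catalanWords hw; omega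

theorem catalanWordsLastGE_succ_zero (n : ℕ) :
    catalanWordsLastGE (n + 1) 0 = catalanWordsLastGE (n + 1) 1 :=
  filter_congr fun _ hw => by simpa using one_le_getLastD_of_mem_catalanWords hw

theorem catalanWordsLastGE_succ_succ (n m : ℕ) :
    catalanWordsLastGE (n + 1) (m + 1) =
      catalanWordsLastGE (n + 1) (m + 2) ∪ (catalanWordsLastGE n m).image (· ++ [m + 1]) := by
  ext w
  simp only [catalanWordsLastGE, mem_union, mem_filter, mem_image, mem_catalanWords_succ]
  constructor
  · rintro ⟨⟨u, hu, k, hk, rfl⟩, hle⟩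
    rw [List.getLastD_concat] at hle ⊢
    rcases hle.eq_or_lt with rfl | hlt
    · exact Or.inr ⟨u, ⟨hu, by omega⟩, rfl⟩
    · exact Or.inl ⟨⟨u, hu, k, hk, rfl⟩, hlt⟩
  · rintro (⟨hw, hle⟩ | ⟨u, ⟨hu, hle⟩, rfl⟩)
    · exact ⟨hw, by omega⟩
    · exact ⟨⟨u, hu, m + 1, ⟨by omega, by omega⟩, rfl⟩, by simp⟩

theorem disjoint_catalanWordsLastGE_image (n m : ℕ) :
    Disjoint (catalanWordsLastGE (n + 1) (m + 2))
      ((catalanWordsLastGE n m).image (· ++ [m + 1])) := by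
  simp only [disjoint_left, catalanWordsLastGE, mem_filter, mem_image, not_exists, not_and]
  rintro _ ⟨-, hle⟩ u - rfl
  simp at hle

theorem card_catalanWordsLastGE_succ_succ (n m : ℕ) :
    #(catalanWordsLastGE (n + 1) (m + 1)) =
      #(catalanWordsLastGE (n + 1) (m + 2)) + #(catalanWordsLastGE n m) := by
  rw [catalanWordsLastGE_succ_succ, card_union_of_disjoint (disjoint_catalanWordsLastGE_image n m),
    card_image_of_injective _ (List.append_left_injective _)]

theorem sum_descentCount_catalanWordsLastGE_succ_succ (n m : ℕ) :
    ∑ w ∈ catalanWordsLastGE (n + 1) (m + 1), descentCount w =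
      ∑ w ∈ catalanWordsLastGE (n + 1) (m + 2), descentCount w +
        ∑ w ∈ catalanWordsLastGE n m, descentCount w + #(catalanWordsLastGE n (m + 2)) := by
  have hnew : #(catalanWordsLastGE n (m + 2)) =
      #{u ∈ catalanWordsLastGE n m | m + 1 < u.getLastD 0} := by
    rw [catalanWordsLastGE, catalanWordsLastGE, filter_filter]
    exact congrArg card (filter_congr fun _ _ => by omega)
  rw [catalanWordsLastGE_succ_succ, sum_union (disjoint_catalanWordsLastGE_image n m),
    sum_image fun _ _ _ _ h => List.append_left_injective _ h, add_assoc, hnew, card_filter,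
    ← sum_add_distrib]
  simp only [descentCount_append_singleton]

/- In the closed forms below, `(m + 2 * j).choose (m + j + 1)` is `C(m + 2j, j - 1)` and
`(m + 2 * k).choose (m + k + 2)` is `C(m + 2k, k - 2)`, written so that they vanish for small
`j`, `k` instead of meeting truncated subtraction. -/
theorem card_catalanWordsLastGE :
    ∀ m j, #(catalanWordsLastGE (m + j) m) + (m + 2 * j).choose (m + j + 1) = (m + 2 * j).choose j
  | 0, 0 => rfl
  | m + 1, 0 => by
    have ih := card_catalanWordsLastGE m 0
    have hrec := card_catalanWordsLastGE_succ_succ m m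
    rw [catalanWordsLastGE_eq_empty (n := m + 1) (m := m + 2) (by omega)] at hrec
    simp_all
  | 0, j + 1 => by
    have ih := card_catalanWordsLastGE 1 j
    have h₁ := Nat.choose_succ_succ' (2 * j + 1) j
    have h₂ := Nat.choose_succ_succ' (2 * j + 1) (j + 1)
    rw [zero_add, catalanWordsLastGE_succ_zero]
    ring_nf at *
    omega
  | m + 1, j + 1 => by
    have ih₁ := card_catalanWordsLastGE (m + 2) j
    have ih₂ := card_catalanWordsLastGE m (j + 1)
    have hrec := card_catalanWordsLastGE_succ_succ (m + j + 1) m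
    have h₁ := Nat.choose_succ_succ' (m + 2 * j + 2) j
    have h₂ := Nat.choose_succ_succ' (m + 2 * j + 2) (m + j + 2)
    ring_nf at *
    omega
termination_by m j => m + 2 * j

theorem sum_descentCount_catalanWordsLastGE : ∀ m k,
    ∑ w ∈ catalanWordsLastGE (m + k + 1) m, descentCount w =
      m * (m + 2 * k).choose (m + k + 1) + (m + 2 * k).choose (m + k + 2)
  | m, 0 => by
    have hzero : ∀ w ∈ catalanWordsLastGE (m + 1) m, descentCount w = 0 := fun w hw =>
      descentCount_eq_zero_of_mem_catalanWords (mem_filter.1 hw).1 (by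
        have := (mem_filter.1 hw).2; omega)
    simp [sum_eq_zero hzero, Nat.choose_eq_zero_of_lt]
  | 0, k + 1 => by
    have ih := sum_descentCount_catalanWordsLastGE 1 k
    have h := Nat.choose_succ_succ' (2 * k + 1) (k + 2)
    rw [show 0 + (k + 1) + 1 = k + 1 + 1 by omega, catalanWordsLastGE_succ_zero]
    ring_nf at *
    omega
  | m + 1, k + 1 => by
    have ih₁ := sum_descentCount_catalanWordsLastGE (m + 2) k
    have ih₂ := sum_descentCount_catalanWordsLastGE m (k + 1)
    have hcard := card_catalanWordsLastGE (m + 2) k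
    have hrec := sum_descentCount_catalanWordsLastGE_succ_succ (m + k + 2) m
    have hsymm := Nat.choose_symm_add (a := k) (b := m + k + 2)
    have h₁ := Nat.choose_succ_succ' (m + 2 * k + 2) (m + k + 2)
    have h₂ := Nat.choose_succ_succ' (m + 2 * k + 2) (m + k + 3)
    ring_nf at *
    rw [h₁, h₂]
    linarith
termination_by m k => m + 2 * k

theorem card_descentPairs_eq_sum_descentCount (n : ℕ) :
    Nat.card {p : List ℕ × ℕ //
        IsCatalanWord p.1 ∧ p.1.length = n ∧
        p.2 + 1 < n ∧ p.1.getD (p.2 + 1) 0 < p.1.getD p.2 0} =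
      ∑ w ∈ catalanWords n, descentCount w := by
  have hpairs : ∀ p : List ℕ × ℕ,
      (IsCatalanWord p.1 ∧ p.1.length = n ∧ p.2 + 1 < n ∧ p.1.getD (p.2 + 1) 0 < p.1.getD p.2 0) ↔
        p ∈ {q ∈ catalanWords n ×ˢ range (n - 1) | q.1.getD (q.2 + 1) 0 < q.1.getD q.2 0} := by
    rintro ⟨w, i⟩
    simp only [mem_filter, mem_product, mem_catalanWords, mem_range, Nat.lt_sub_iff_add_lt,
      and_assoc]
  rw [Nat.card_congr (Equiv.subtypeEquivRight hpairs), Nat.card_eq_finsetCard, card_filter,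
    sum_product]
  refine sum_congr rfl fun w hw => ?_
  rw [descentCount, card_filter, (mem_catalanWords.1 hw).2]

/-- Total number of descents over all Catalan words of length n. -/
theorem total_descents (n : ℕ) (hn : 3 ≤ n) :
    Nat.card {p : List ℕ × ℕ //
        IsCatalanWord p.1 ∧ p.1.length = n ∧
        p.2 + 1 < n ∧ p.1.getD (p.2 + 1) 0 < p.1.getD p.2 0} =
      (2 * n - 2).choose (n - 3) := by
  obtain ⟨k, rfl⟩ : ∃ k, n = k + 1 := ⟨n - 1, by omega⟩
  calc _ = ∑ w ∈ catalanWordsLastGE (0 + k + 1) 0, descentCount w := by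
        rw [card_descentPairs_eq_sum_descentCount, zero_add, catalanWordsLastGE_zero]
    _ = (2 * k).choose (k + 2) := by rw [sum_descentCount_catalanWordsLastGE]; simp
    _ = (2 * (k + 1) - 2).choose (k + 1 - 3) := by
        rw [show 2 * (k + 1) - 2 = 2 * k by omega]
        exact Nat.choose_symm_of_eq_add (by omega)
end
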